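/- Optimal state distinguishing (Helstrom bound), as used in the security proofs: let ρ and σ be density matrices over a nonempty finite index type α. Then (i) for every Hermitian matrix E with 0 ≤ E ≤ 1 (positive semidefinite and with 1 − E positive semidefinite), the distinguishing probability (1/2) · (trace (E * ρ) + trace ((1 − E) * σ)).re is at most (1/2) · (1 + TD(ρ, σ)); and (ii) there exists such a matrix E for which this distinguishing probability equals (1/2) · (1 + TD(ρ, σ)). -/

import Mathlib

open Matrix BigOperators
open scoped ComplexOrder

/-- The trace norm of a square complex matrix: the trace of the positive semidefinite
square root of `Aᴴ * A`. -/
noncomputable def traceNorm {α : Type*} [Fintype α] [DecidableEq α]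
    (A : Matrix α α ℂ) : ℝ :=
  (((Matrix.posSemidef_conjTranspose_mul_self A).1.eigenvectorUnitary : Matrix α α ℂ) *
      Matrix.diagonal (((↑) : ℝ → ℂ) ∘ (Real.sqrt ·) ∘ (Matrix.posSemidef_conjTranspose_mul_self A).1.eigenvalues) *
      (star ((Matrix.posSemidef_conjTranspose_mul_self A).1.eigenvectorUnitary : Matrix α α ℂ))).trace.re

/-- The trace distance of two matrices. -/
noncomputable def traceDist {α : Type*} [Fintype α] [DecidableEq α]
    (ρ σ : Matrix α α ℂ) : ℝ :=
  (1 / 2) * traceNorm (ρ - σ)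

/-- A density matrix: Hermitian positive semidefinite with trace 1. -/
def IsDensityMatrix {α : Type*} [Fintype α] (ρ : Matrix α α ℂ) : Prop :=
  ρ.PosSemidef ∧ ρ.trace = 1

/-!
Put `Δ = ρ - σ`, so that the success probability of the test `E` is `(1 + Re tr (E Δ)) / 2`.
Split `Δ = Δ⁺ - Δ⁻` into positive and negative parts. The trace of a product of two positive
matrices is nonnegative, so for `0 ≤ E ≤ 1` we get
`tr (E Δ) = tr Δ⁺ - tr ((1 - E) Δ⁺) - tr (E Δ⁻) ≤ tr Δ⁺`,
with equality for the spectral projection of `Δ` onto its positive eigenvalues.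
Finally `|Δ| + Δ = 2 Δ⁺` and `tr Δ = 0` give `tr Δ⁺ = ‖Δ‖₁ / 2 = TD(ρ, σ)`.
-/

open scoped MatrixOrder

namespace Matrix

variable {n 𝕜 : Type*} [Fintype n] [DecidableEq n] [RCLike 𝕜]

theorem trace_mul_nonneg {A B : Matrix n n 𝕜} (hA : 0 ≤ A) (hB : 0 ≤ B) :
    0 ≤ (A * B).trace := by
  rw [← CFC.sqrt_mul_sqrt_self A, Matrix.mul_assoc, trace_mul_comm]
  have h := star_left_conjugate_nonneg hB (CFC.sqrt A)
  rw [(CFC.sqrt_nonneg A).isSelfAdjoint.star_eq] at h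
  exact h.posSemidef.trace_nonneg

theorem re_trace_mul_le_re_trace_posPart {A E : Matrix n n 𝕜} (hA : IsSelfAdjoint A)
    (hE₀ : 0 ≤ E) (hE₁ : E ≤ 1) : RCLike.re (E * A).trace ≤ RCLike.re (A⁺).trace := by
  have hpos := RCLike.nonneg_iff.mp (trace_mul_nonneg (sub_nonneg.mpr hE₁) (CFC.posPart_nonneg A))
  have hneg := RCLike.nonneg_iff.mp (trace_mul_nonneg hE₀ (CFC.negPart_nonneg A))
  have hsplit : (E * A).trace = (A⁺).trace - ((1 - E) * A⁺).trace - (E * A⁻).trace := by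
    conv_lhs => rw [← CFC.posPart_sub_negPart A]
    simp only [Matrix.mul_sub, Matrix.sub_mul, Matrix.one_mul, trace_sub]
    ring
  rw [hsplit, map_sub, map_sub]
  linarith [hpos.1, hneg.1]

noncomputable def posSpectralProj (A : Matrix n n 𝕜) : Matrix n n 𝕜 :=
  cfc ((Set.Ioi (0 : ℝ)).indicator 1) A

theorem isSelfAdjoint_posSpectralProj (A : Matrix n n 𝕜) : IsSelfAdjoint (posSpectralProj A) :=
  cfc_predicate (p := IsSelfAdjoint) _ _

theorem posSpectralProj_nonneg (A : Matrix n n 𝕜) : 0 ≤ posSpectralProj A :=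
  cfc_nonneg fun x _ => Set.indicator_nonneg (fun _ _ => zero_le_one) x

theorem posSpectralProj_le_one (A : Matrix n n 𝕜) : posSpectralProj A ≤ 1 :=
  cfc_le_one _ _ fun x _ => Set.indicator_le_self' (fun _ _ => zero_le_one) x

theorem posSpectralProj_mul_self {A : Matrix n n 𝕜} (hA : IsSelfAdjoint A) :
    posSpectralProj A * A = A⁺ := by
  conv_lhs => arg 2; rw [← cfc_id' ℝ A]
  rw [posSpectralProj, ← cfc_mul _ _ A (A.finite_real_spectrum.continuousOn _),
    CFC.posPart_def, cfcₙ_eq_cfc]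
  refine cfc_congr fun x _ => ?_
  by_cases hx : 0 < x
  · simp [hx, hx.le]
  · simp [hx, not_lt.mp hx]

theorem trace_mul_add_trace_one_sub_mul {R : Type*} [CommRing R] (E ρ σ : Matrix n n R)
    (hσ : σ.trace = 1) : (E * ρ).trace + ((1 - E) * σ).trace = 1 + (E * (ρ - σ)).trace := by
  rw [Matrix.sub_mul, Matrix.one_mul, Matrix.mul_sub, trace_sub, trace_sub, hσ]
  ring

end Matrix

section traceNorm

variable {α : Type*} [Fintype α] [DecidableEq α]

theorem traceNorm_eq_re_trace_abs (A : Matrix α α ℂ) : traceNorm A = (CFC.abs A).trace.re := by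
  have hP := posSemidef_conjTranspose_mul_self A
  rw [CFC.abs, star_eq_conjTranspose, CFC.sqrt_eq_real_sqrt _ hP.nonneg, cfcₙ_eq_cfc,
    hP.1.cfc_eq]
  rfl

theorem traceDist_eq_re_trace_posPart {ρ σ : Matrix α α ℂ} (hρ : ρ.IsHermitian)
    (hσ : σ.IsHermitian) (htr : ρ.trace = σ.trace) :
    traceDist ρ σ = ((ρ - σ)⁺).trace.re := by
  have h := congrArg (fun M => (trace M).re) (CFC.abs_add_self (ρ - σ) (hρ.sub hσ))
  simp only [trace_add, trace_sub, htr, sub_self, add_zero, trace_smul, Complex.smul_re] at h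
  rw [traceDist, traceNorm_eq_re_trace_abs, h, two_smul]
  ring

end traceNorm

theorem stmt14_general {α : Type*} [Fintype α] [DecidableEq α]
    (ρ σ : Matrix α α ℂ) (hρ : IsDensityMatrix ρ) (hσ : IsDensityMatrix σ) :
    (∀ E : Matrix α α ℂ, E.IsHermitian → E.PosSemidef → (1 - E).PosSemidef →
        (1 / 2 : ℝ) * ((E * ρ).trace + ((1 - E) * σ).trace).re ≤
          (1 / 2) * (1 + traceDist ρ σ)) ∧
    (∃ E : Matrix α α ℂ, E.IsHermitian ∧ E.PosSemidef ∧ (1 - E).PosSemidef ∧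
        (1 / 2 : ℝ) * ((E * ρ).trace + ((1 - E) * σ).trace).re =
          (1 / 2) * (1 + traceDist ρ σ)) := by
  have hΔ : IsSelfAdjoint (ρ - σ) := hρ.1.1.sub hσ.1.1
  have hTD : traceDist ρ σ = ((ρ - σ)⁺).trace.re :=
    traceDist_eq_re_trace_posPart hρ.1.1 hσ.1.1 (hρ.2.trans hσ.2.symm)
  simp only [trace_mul_add_trace_one_sub_mul _ _ _ hσ.2, Complex.add_re, Complex.one_re, hTD]
  refine ⟨fun E _ hE₀ hE₁ => ?_, posSpectralProj (ρ - σ), isSelfAdjoint_posSpectralProj _,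
    (posSpectralProj_nonneg _).posSemidef, le_iff.mp (posSpectralProj_le_one _), ?_⟩
  · have h := re_trace_mul_le_re_trace_posPart hΔ hE₀.nonneg (le_iff.mpr hE₁)
    rw [RCLike.re_to_complex, RCLike.re_to_complex] at h
    linarith
  · rw [posSpectralProj_mul_self hΔ]

theorem stmt14 {α : Type*} [Fintype α] [DecidableEq α] [Nonempty α]
    (ρ σ : Matrix α α ℂ) (hρ : IsDensityMatrix ρ) (hσ : IsDensityMatrix σ) :
    (∀ E : Matrix α α ℂ, E.IsHermitian → E.PosSemidef → (1 - E).PosSemidef →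
        (1 / 2 : ℝ) * ((E * ρ).trace + ((1 - E) * σ).trace).re ≤
          (1 / 2) * (1 + traceDist ρ σ)) ∧
    (∃ E : Matrix α α ℂ, E.IsHermitian ∧ E.PosSemidef ∧ (1 - E).PosSemidef ∧
        (1 / 2 : ℝ) * ((E * ρ).trace + ((1 - E) * σ).trace).re =
          (1 / 2) * (1 + traceDist ρ σ)) :=
  stmt14_general ρ σ hρ hσ
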